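/- arXiv:2310.06745 — 4 statements merged into one kernel-verified Lean document; each statement's English description precedes it below -/
import Mathlib

section
/- Let κ ≥ 2, let d ∈ D, and let γ ∈ Γ_κ(d). Then γ ⪯ diag(d), i.e., the matrix diag(d) − γ is positive semidefinite. -/
open Matrix

/-! The quadratic form of `diag(d) − γ` is the weighted Laplacian form
`xᵀ (diag(d) − γ) x = ½ ∑ₖ ∑ₖ' γₖₖ' (xₖ − xₖ')²`, since `d` is the vector of row sums of the
symmetric matrix `γ`; it is nonnegative because the entries of `γ` are. -/

namespace Matrix

variable {n R : Type*} [Fintype n] [DecidableEq n]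

theorem two_mul_dotProduct_diagonal_sum_sub_mulVec [CommRing R] {A : Matrix n n R}
    (hA : A.IsSymm) (x : n → R) :
    2 * (x ⬝ᵥ ((diagonal fun i ↦ ∑ j, A i j) - A) *ᵥ x) =
      ∑ i, ∑ j, A i j * (x i - x j) ^ 2 := by
  have hform : x ⬝ᵥ ((diagonal fun i ↦ ∑ j, A i j) - A) *ᵥ x =
      ∑ i, ∑ j, A i j * (x i ^ 2 - x i * x j) := by
    simp only [sub_mulVec, dotProduct, Pi.sub_apply, mulVec_diagonal]
    simp only [mulVec, dotProduct, Finset.sum_mul, Finset.mul_sum, ← Finset.sum_sub_distrib]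
    exact Finset.sum_congr rfl fun i _ ↦ Finset.sum_congr rfl fun j _ ↦ by ring
  have hswap : ∑ i, ∑ j, A i j * (x j ^ 2 - x i * x j) =
      ∑ i, ∑ j, A i j * (x i ^ 2 - x i * x j) := by
    rw [Finset.sum_comm]
    refine Finset.sum_congr rfl fun i _ ↦ Finset.sum_congr rfl fun j _ ↦ ?_
    rw [hA.apply i j]
    ring
  rw [hform, two_mul]
  nth_rw 2 [← hswap]
  simp only [← Finset.sum_add_distrib]
  exact Finset.sum_congr rfl fun i _ ↦ Finset.sum_congr rfl fun j _ ↦ by ring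

theorem posSemidef_diagonal_sum_sub [CommRing R] [LinearOrder R] [IsStrictOrderedRing R]
    [StarRing R] [TrivialStar R] {A : Matrix n n R} (hA : A.IsSymm) (hA0 : ∀ i j, 0 ≤ A i j) :
    ((diagonal fun i ↦ ∑ j, A i j) - A).PosSemidef := by
  refine .of_dotProduct_mulVec_nonneg ?_ fun x ↦ ?_
  · rw [IsHermitian, conjTranspose_eq_transpose_of_trivial]
    exact (isSymm_diagonal _).sub hA
  · rw [star_trivial]
    have htwice : 0 ≤ 2 * (x ⬝ᵥ ((diagonal fun i ↦ ∑ j, A i j) - A) *ᵥ x) := by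
      rw [two_mul_dotProduct_diagonal_sum_sub_mulVec hA]
      exact Finset.sum_nonneg fun i _ ↦ Finset.sum_nonneg fun j _ ↦
        mul_nonneg (hA0 i j) (sq_nonneg _)
    exact nonneg_of_mul_nonneg_right htwice two_pos

end Matrix

theorem stmt0_general (κ : ℕ) (d : Fin κ → ℝ)
    (γ : Matrix (Fin κ) (Fin κ) ℝ)
    (hγsym : γ.IsSymm)
    (hγ0 : ∀ k k', 0 ≤ γ k k')
    (hrow : ∀ k, ∑ k', γ k k' = d k) :
    (Matrix.diagonal d - γ).PosSemidef := by
  obtain rfl : (fun k ↦ ∑ k', γ k k') = d := funext hrow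
  exact posSemidef_diagonal_sum_sub hγsym hγ0

/-- For `κ ≥ 2`, `d` in the unit simplex `D`, and `γ ∈ Γ_κ(d)`
(symmetric positive semidefinite, entries in `[0,1]`, row sums `d`),
the matrix `diag(d) − γ` is positive semidefinite. -/
theorem stmt0 (κ : ℕ) (hκ : 2 ≤ κ) (d : Fin κ → ℝ)
    (hd0 : ∀ k, 0 ≤ d k) (hd1 : ∀ k, d k ≤ 1) (hdsum : ∑ k, d k = 1)
    (γ : Matrix (Fin κ) (Fin κ) ℝ)
    (hγsym : γ.IsSymm) (hγpsd : γ.PosSemidef)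
    (hγ0 : ∀ k k', 0 ≤ γ k k') (hγ1 : ∀ k k', γ k k' ≤ 1)
    (hrow : ∀ k, ∑ k', γ k k' = d k) :
    (Matrix.diagonal d - γ).PosSemidef :=
  stmt0_general κ d γ hγsym hγ0 hrow
end

section
/- For every θ ∈ Θ, all integers N ≥ 1 and n ≥ 1, arbitrary matrices σ¹, …, σⁿ ∈ ℝ^{κ×N}, and arbitrary vectors u¹, …, uⁿ ∈ ℝ^κ, one has Σ_{ℓ,ℓ'=1}^n ⟨∇ξ_θ(σ^ℓ (σ^{ℓ'})ᵀ / N) u^{ℓ'}, u^ℓ⟩ ≥ 0. (This is the positive semidefiniteness of the matrix-valued covariance kernel of the ℝ^κ-valued Gaussian process Z_{N,θ} with E[Z_{N,θ}(σ) Z_{N,θ}(σ')ᵀ] = ∇ξ_θ(σσ'ᵀ/N).) -/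
/-! Index the kernels by pairs `(ℓ, k)`. The block matrix of the `σ^ℓ (σ^{ℓ'})ᵀ / N` is a Gram
matrix, hence positive semidefinite, and so are its Hadamard powers (Schur product theorem), its
compressions `⟨(R^{ℓℓ'})^{∘p} w, w⟩`, and their lifts along `(ℓ, k) ↦ ℓ`. By the product rule,
`∇ξ_θ(R)_{kk'}` is a sum over `j`, with coefficients `p n_j ≥ 0`, of products of powers of the
`⟨R^{∘p} w_i, w_i⟩`, of `R_{kk'}^{p-1}` and of `w_{jk} w_{jk'}`; so the block matrix of the
`∇ξ_θ(R^{ℓℓ'})` is a nonnegative combination of Hadamard products of positive semidefinite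
matrices, and the sum in question is its quadratic form at `(u^ℓ_k)`. -/

open Matrix

/-- Square real matrices of size `κ`. -/
abbrev Mat (κ : ℕ) := Matrix (Fin κ) (Fin κ) ℝ

/-- An element `θ = (p, m, n₁, …, n_m, w₁, …, w_m)` of the parameter set `Θ`:
`p, m, n₁, …, n_m` are positive integers and `w₁, …, w_m ∈ [−1,1]^κ`. -/
structure SpinParam (κ : ℕ) where
  p : ℕ
  m : ℕ
  n : Fin m → ℕ
  w : Fin m → Fin κ → ℝ
  p_pos : 0 < p
  m_pos : 0 < m
  n_pos : ∀ j, 0 < n j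
  w_bdd : ∀ j k, |w j k| ≤ 1

/-- `deg(θ) = p (n₁ + ⋯ + n_m)`. -/
def SpinParam.deg {κ : ℕ} (θ : SpinParam κ) : ℕ := θ.p * ∑ j, θ.n j

/-- `p`-th entrywise (Hadamard) power of a matrix; `hadPow R 0` is the all-ones matrix. -/
def hadPow {κ : ℕ} (R : Mat κ) (p : ℕ) : Mat κ := Matrix.of fun k k' => R k k' ^ p

/-- `⟨R w, w⟩ = ∑_{k,k'} R_{k,k'} w_{k'} w_k`. -/
def quadForm {κ : ℕ} (R : Mat κ) (w : Fin κ → ℝ) : ℝ := ∑ k, ∑ k', R k k' * w k' * w k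

/-- `ξ_θ(R) = ∏_j ⟨R^{∘p} w_j, w_j⟩^{n_j}`. -/
def xiTheta {κ : ℕ} (θ : SpinParam κ) (R : Mat κ) : ℝ :=
  ∏ j, quadForm (hadPow R θ.p) (θ.w j) ^ θ.n j

/-- The matrix of partial derivatives `(∂f/∂R_{k,k'})(R)` of a function of a matrix. -/
noncomputable def gradMat {κ : ℕ} (f : Mat κ → ℝ) (R : Mat κ) : Mat κ :=
  Matrix.of fun k k' =>
    deriv (fun t : ℝ => f (R + t • Matrix.single k k' (1 : ℝ))) 0

/-- `∇ξ_θ`. -/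
noncomputable def gradXi {κ : ℕ} (θ : SpinParam κ) : Mat κ → Mat κ := gradMat (xiTheta θ)

/-- `⟨A, B⟩ = tr(AᵀB) = ∑_{k,k'} A_{k,k'} B_{k,k'}`. -/
def matInner {κ : ℕ} (A B : Mat κ) : ℝ := ∑ k, ∑ k', A k k' * B k k'

/-- `ϑ_θ(R) = ⟨R, ∇ξ_θ(R)⟩ − ξ_θ(R)`. -/
noncomputable def varthetaTheta {κ : ℕ} (θ : SpinParam κ) (R : Mat κ) : ℝ :=
  matInner R (gradXi θ R) - xiTheta θ R

/-- `‖R‖₁ = ∑_{k,k'} |R_{k,k'}|`. -/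
def l1norm {κ : ℕ} (R : Mat κ) : ℝ := ∑ k, ∑ k', |R k k'|

open Finset

namespace Matrix

variable {ι L K T : Type*} [Fintype ι] [Fintype L] [Fintype K]

theorem PosSemidef.prod_hadamard {α : Type*} (s : Finset α) {A : α → Matrix ι ι ℝ}
    (hA : ∀ i ∈ s, (A i).PosSemidef) : (of fun a b => ∏ i ∈ s, A i a b).PosSemidef := by
  classical
  induction s using Finset.induction_on with
  | empty => simpa [vecMulVec] using posSemidef_vecMulVec_self_star fun _ : ι => (1 : ℝ)
  | insert i s hi ih =>
    have h := (hA i (mem_insert_self i s)).hadamard (ih fun j hj => hA j (mem_insert_of_mem hj))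
    rwa [show A i ⊙ (of fun a b => ∏ i ∈ s, A i a b) = of fun a b => ∏ i ∈ insert i s, A i a b by
      ext a b; simp [prod_insert hi]] at h

theorem PosSemidef.map_pow {A : Matrix ι ι ℝ} (hA : A.PosSemidef) (q : ℕ) :
    (A.map (· ^ q)).PosSemidef := by
  simpa [map] using PosSemidef.prod_hadamard (range q) fun _ _ => hA

theorem posSemidef_comp_smul_mul_transpose [Fintype T] {c : ℝ} (hc : 0 ≤ c)
    (σ : L → Matrix K T ℝ) :
    (comp L L K K ℝ (of fun ℓ ℓ' => c • (σ ℓ * (σ ℓ')ᵀ))).PosSemidef := by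
  have h := (posSemidef_self_mul_conjTranspose (of fun (a : L × K) t => σ a.1 a.2 t)).smul hc
  convert h using 2
  ext a b
  simp [mul_apply]

theorem PosSemidef.map_quadForm {κ : ℕ} {R : Matrix L L (Mat κ)}
    (hR : (comp L L (Fin κ) (Fin κ) ℝ R).PosSemidef) (w : Fin κ → ℝ) :
    (R.map (quadForm · w)).PosSemidef := by
  classical
  have h := hR.conjTranspose_mul_mul_same (of fun a ℓ => if a.1 = ℓ then w a.2 else 0)
  convert h using 2
  ext ℓ ℓ'
  simp only [quadForm, map_apply, conjTranspose_eq_transpose_of_trivial, mul_apply,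
    transpose_apply, of_apply, comp_apply, ite_mul, zero_mul, Fintype.sum_prod_type, sum_ite_irrel,
    sum_const_zero, sum_ite_eq', mem_univ, ↓reduceIte, mul_ite, sum_mul, mul_zero]
  rw [sum_comm]
  exact sum_congr rfl fun _ _ => sum_congr rfl fun _ _ => by ring

theorem sum_dotProduct_mulVec_eq_comp (A : Matrix L L (Matrix K K ℝ)) (u : L → K → ℝ) :
    ∑ ℓ, ∑ ℓ', u ℓ ⬝ᵥ (A ℓ ℓ' *ᵥ u ℓ') =
      (fun a => u a.1 a.2) ⬝ᵥ (comp L L K K ℝ A *ᵥ fun a => u a.1 a.2) := by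
  simp only [dotProduct, mulVec, comp_apply, Fintype.sum_prod_type, mul_sum]
  exact sum_congr rfl fun _ _ => sum_comm

end Matrix

section Gradient

variable {κ : ℕ}

theorem hasDerivAt_quadForm_hadPow (R E : Mat κ) (w : Fin κ → ℝ) (p : ℕ) :
    HasDerivAt (fun t : ℝ => quadForm (hadPow (R + t • E) p) w)
      (p * quadForm (hadPow R (p - 1) ⊙ E) w) 0 := by
  have h (a b : Fin κ) : HasDerivAt (fun t : ℝ => (R a b + t * E a b) ^ p * w b * w a)
      (p * (R a b ^ (p - 1) * E a b) * w b * w a) 0 := by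
    simpa [mul_assoc] using
      (((((hasDerivAt_id (0 : ℝ)).mul_const (E a b)).const_add (R a b)).pow p).mul_const
        (w b)).mul_const (w a)
  have hsum := HasDerivAt.fun_sum (u := univ) fun a _ =>
    HasDerivAt.fun_sum (u := univ) fun b _ => h a b
  have hf : (fun t : ℝ => quadForm (hadPow (R + t • E) p) w) =
      fun t => ∑ a, ∑ b, (R a b + t * E a b) ^ p * w b * w a := by
    ext t
    simp [quadForm, hadPow]
  rw [hf]
  refine hsum.congr_deriv ?_
  simp [quadForm, hadPow, mul_sum, mul_assoc]

theorem hasDerivAt_xiTheta (θ : SpinParam κ) (R E : Mat κ) :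
    HasDerivAt (fun t : ℝ => xiTheta θ (R + t • E))
      (∑ j, (∏ i ∈ univ.erase j, quadForm (hadPow R θ.p) (θ.w i) ^ θ.n i) *
        (θ.n j * quadForm (hadPow R θ.p) (θ.w j) ^ (θ.n j - 1) *
          (θ.p * quadForm (hadPow R (θ.p - 1) ⊙ E) (θ.w j)))) 0 := by
  have h := HasDerivAt.fun_finsetProd (u := univ) fun j _ =>
    (hasDerivAt_quadForm_hadPow R E (θ.w j) θ.p).fun_pow (θ.n j)
  simp only [zero_smul, add_zero] at h
  exact h

theorem quadForm_hadamard_single (A : Mat κ) (w : Fin κ → ℝ) (k k' : Fin κ) :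
    quadForm (A ⊙ single k k' 1) w = A k k' * w k' * w k := by
  simp [quadForm, single_apply, ite_and, ite_mul, mul_ite]

theorem gradXi_apply (θ : SpinParam κ) (R : Mat κ) (k k' : Fin κ) :
    gradXi θ R k k' =
      ∑ j, θ.p * θ.n j * ((∏ i ∈ univ.erase j, quadForm (hadPow R θ.p) (θ.w i) ^ θ.n i) *
        quadForm (hadPow R θ.p) (θ.w j) ^ (θ.n j - 1)) * R k k' ^ (θ.p - 1) * θ.w j k *
          θ.w j k' := by
  rw [gradXi, gradMat, of_apply, (hasDerivAt_xiTheta θ R (single k k' 1)).deriv]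
  simp only [quadForm_hadamard_single]
  exact sum_congr rfl fun j _ => by simp only [hadPow, of_apply]; ring

end Gradient

theorem Matrix.PosSemidef.comp_map_gradXi {L : Type*} [Fintype L] {κ : ℕ} (θ : SpinParam κ)
    {R : Matrix L L (Mat κ)} (hR : (comp L L (Fin κ) (Fin κ) ℝ R).PosSemidef) :
    (comp L L (Fin κ) (Fin κ) ℝ (R.map (gradXi θ))).PosSemidef := by
  set Q : Fin θ.m → Matrix L L ℝ := fun i => R.map fun S => quadForm (hadPow S θ.p) (θ.w i)
  have hQ (i : Fin θ.m) : (Q i).PosSemidef :=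
    (hR.map_pow θ.p).map_quadForm (R := R.map (hadPow · θ.p)) (θ.w i)
  set C : Fin θ.m → Matrix L L ℝ := fun j =>
    of fun ℓ ℓ' => (∏ i ∈ univ.erase j, Q i ℓ ℓ' ^ θ.n i) * Q j ℓ ℓ' ^ (θ.n j - 1)
  have hC (j : Fin θ.m) : (C j).PosSemidef :=
    (PosSemidef.prod_hadamard (univ.erase j) fun i _ => (hQ i).map_pow (θ.n i)).hadamard
      ((hQ j).map_pow (θ.n j - 1))
  have hgrad : comp L L (Fin κ) (Fin κ) ℝ (R.map (gradXi θ)) =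
      ∑ j, ((θ.p * θ.n j : ℕ) : ℝ) • ((C j).submatrix Prod.fst Prod.fst ⊙
        (comp L L (Fin κ) (Fin κ) ℝ R).map (· ^ (θ.p - 1)) ⊙
          vecMulVec (fun a => θ.w j a.2) (fun a => θ.w j a.2)) := by
    ext a b
    simp only [comp_apply, map_apply, gradXi_apply, Nat.cast_mul, sum_apply, smul_apply,
      hadamard_apply, submatrix_apply, of_apply, vecMulVec_apply, smul_eq_mul, C, Q]
    exact sum_congr rfl fun j _ => by ring
  rw [hgrad]
  refine posSemidef_sum _ fun j _ => PosSemidef.smul ?_ (Nat.cast_nonneg _)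
  exact (((hC j).submatrix Prod.fst).hadamard (hR.map_pow _)).hadamard
    (posSemidef_vecMulVec_self_star _)

theorem stmt6_general (κ : ℕ) (θ : SpinParam κ) (N n : ℕ)
    (σ : Fin n → Matrix (Fin κ) (Fin N) ℝ) (u : Fin n → Fin κ → ℝ) :
    0 ≤ ∑ ℓ, ∑ ℓ', dotProduct (u ℓ)
        ((gradXi θ ((N : ℝ)⁻¹ • (σ ℓ * (σ ℓ')ᵀ))).mulVec (u ℓ')) := by
  have hR := posSemidef_comp_smul_mul_transpose (by positivity : (0 : ℝ) ≤ (N : ℝ)⁻¹) σ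
  have h := (hR.comp_map_gradXi θ).dotProduct_mulVec_nonneg fun a => u a.1 a.2
  rw [star_trivial, ← sum_dotProduct_mulVec_eq_comp] at h
  exact h

/-- For every `θ ∈ Θ`, `N, n ≥ 1`, matrices `σ¹, …, σⁿ ∈ ℝ^{κ×N}` and
vectors `u¹, …, uⁿ ∈ ℝ^κ`, one has `Σ_{ℓ,ℓ'} ⟨∇ξ_θ(σ^ℓ (σ^{ℓ'})ᵀ/N) u^{ℓ'}, u^ℓ⟩ ≥ 0`
(positive semidefiniteness of the matrix covariance kernel of `Z_{N,θ}`). -/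
theorem stmt6 (κ : ℕ) (hκ : 2 ≤ κ) (θ : SpinParam κ) (N n : ℕ) (hN : 1 ≤ N) (hn : 1 ≤ n)
    (σ : Fin n → Matrix (Fin κ) (Fin N) ℝ) (u : Fin n → Fin κ → ℝ) :
    0 ≤ ∑ ℓ, ∑ ℓ', dotProduct (u ℓ)
        ((gradXi θ ((N : ℝ)⁻¹ • (σ ℓ * (σ ℓ')ᵀ))).mulVec (u ℓ')) :=
  stmt6_general κ θ N n σ u
end

section
/- Assume ξ : ℝ^{κ×κ} → ℝ admits a countable set Θ₀ ⊆ Θ and reals (α_θ)_{θ∈Θ₀} with ξ(R) = Σ_{θ∈Θ₀} α_θ² ξ_θ(R) for all ‖R‖₁ ≤ 1 and Σ_{θ∈Θ₀} α_θ² (1+ε₀)^{deg(θ)} < ∞ for some ε₀ > 0 (so ξ is smooth on a neighborhood of the unit ℓ¹-ball). Assume c := inf_{R ∈ R_κ} λ_min(∇²ξ(R)) > 0. Assume β = (β_θ)_{θ∈Θ_Q} satisfies Σ_{θ∈Θ_Q} β_θ² (1+ε₁)^{deg(θ)} < ∞ for some ε₁ > 0, and Σ_{θ∈Θ_Q} β_θ²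 C_θ < c. Then ξ_β(R) = ξ(R) + Σ_{θ∈Θ_Q} β_θ² ξ_θ(R) is convex on R_κ. -/
open Matrix

/-- The action `(ω•R)_{k,k'} = R_{ω⁻¹(k), ω⁻¹(k')}` of a permutation on a matrix. -/
def permMat {κ : ℕ} (ω : Equiv.Perm (Fin κ)) (R : Mat κ) : Mat κ :=
  Matrix.of fun k k' => R (ω⁻¹ k) (ω⁻¹ k')

/-- The action `(ω•w)_k = w_{ω⁻¹(k)}` of a permutation on a vector. -/
def permVec {κ : ℕ} (ω : Equiv.Perm (Fin κ)) (w : Fin κ → ℝ) : Fin κ → ℝ :=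
  fun k => w (ω⁻¹ k)

/-- The action `ω•θ = (p, m, n₁, …, n_m, ω•w₁, …, ω•w_m)` on parameters. -/
def permParam {κ : ℕ} (ω : Equiv.Perm (Fin κ)) (θ : SpinParam κ) : SpinParam κ where
  p := θ.p
  m := θ.m
  n := θ.n
  w := fun j => permVec ω (θ.w j)
  p_pos := θ.p_pos
  m_pos := θ.m_pos
  n_pos := θ.n_pos
  w_bdd := fun j k => θ.w_bdd j (ω⁻¹ k)

/-- `Θ_Q`: parameters whose vectors `w₁, …, w_m` have all coordinates rational. -/
abbrev SpinParamQ (κ : ℕ) := {θ : SpinParam κ // ∀ j k, ∃ q : ℚ, θ.w j k = (q : ℝ)}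

/-- The permutation action on `Θ_Q`. -/
def permParamQ {κ : ℕ} (ω : Equiv.Perm (Fin κ)) (θ : SpinParamQ κ) : SpinParamQ κ :=
  ⟨permParam ω θ.1, fun j k => θ.2 j (ω⁻¹ k)⟩

/-- The Hessian quadratic form `⟨∇²f(R) Q, Q⟩`, i.e. the second derivative of
`t ↦ f(R + tQ)` at `0`. -/
noncomputable def hessQuad {κ : ℕ} (f : Mat κ → ℝ) (R Q : Mat κ) : ℝ :=
  iteratedDeriv 2 (fun t : ℝ => f (R + t • Q)) 0

/-- Squared Frobenius norm. -/
def frobSq {κ : ℕ} (Q : Mat κ) : ℝ := ∑ k, ∑ k', Q k k' ^ 2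

/-- `C` dominates both `‖∇ξ_θ(R)‖_∞` and `‖∇²ξ_θ(R)‖_op` for all `‖R‖₁ ≤ 1`. -/
def IsCBound {κ : ℕ} (θ : SpinParam κ) (C : ℝ) : Prop :=
  ∀ R : Mat κ, l1norm R ≤ 1 →
    (∀ k k', |gradXi θ R k k'| ≤ C) ∧
      ∀ Q : Mat κ, |hessQuad (xiTheta θ) R Q| ≤ C * frobSq Q

/-- `C_θ = sup_{‖R‖₁ ≤ 1} max(‖∇ξ_θ(R)‖_∞, ‖∇²ξ_θ(R)‖_op)`, realized as the least
constant dominating both quantities. -/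
noncomputable def Ctheta {κ : ℕ} (θ : SpinParam κ) : ℝ := sInf {C : ℝ | IsCBound θ C}

/-- `R_κ = {R ∈ [0,1]^{κ×κ} : ‖R‖₁ ≤ 1}`. -/
def Rset (κ : ℕ) : Set (Mat κ) :=
  {R | (∀ k k', 0 ≤ R k k' ∧ R k k' ≤ 1) ∧ l1norm R ≤ 1}

/-!
Along a segment `s ↦ Y + s • Q` of `R_κ`, the second derivative of `ξ_β` is
`⟨∇²ξ Q, Q⟩ + Σ β_θ² ⟨∇²ξ_θ Q, Q⟩ ≥ c ‖Q‖² − (Σ β_θ² C_θ) ‖Q‖² ≥ 0`, so `ξ_β` is convex on every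
segment. Termwise differentiation of both series is justified on the open segment, which stays in
the unit `ℓ¹` ball: there `t ↦ ξ_θ(R + t Q)` is bounded by `1` and its first and second derivatives
by `deg θ ‖Q‖₁` and `(deg θ ‖Q‖₁)²`, while `deg θ ^ 2 = O((1 + ε)^deg θ)`.
-/

open Set Filter Topology

lemma convexOn_of_convexOn_segment {E : Type*} [AddCommGroup E] [Module ℝ E] {s : Set E}
    {f : E → ℝ} (hs : Convex ℝ s)
    (h : ∀ x ∈ s, ∀ y ∈ s, ConvexOn ℝ (Icc (0 : ℝ) 1) fun t => f (y + t • (x - y))) :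
    ConvexOn ℝ s f := by
  refine ⟨hs, fun x hx y hy a b ha hb hab => ?_⟩
  have h' := (h x hx y hy).2 (x := 1) (y := 0) ⟨zero_le_one, le_rfl⟩ ⟨le_rfl, zero_le_one⟩ ha hb hab
  simp only [smul_eq_mul, mul_one, mul_zero, add_zero, one_smul, zero_smul,
    add_sub_cancel] at h' ⊢
  obtain rfl : b = 1 - a := by linarith
  convert h' using 2
  module

lemma exists_one_add_mul_sq_le {ε : ℝ} (hε : 0 < ε) (L : ℝ) :
    ∃ K, ∀ n : ℕ, (1 + n * L) ^ 2 ≤ K * (1 + ε) ^ n := by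
  set q := (1 + ε)⁻¹
  have hq₀ : 0 ≤ q := by positivity
  have hq : ‖q‖ < 1 := by
    rw [Real.norm_of_nonneg hq₀]
    exact inv_lt_one_of_one_lt₀ (by linarith)
  have hsum : Summable fun n : ℕ => (1 + n * L) ^ 2 * q ^ n := by
    have h k := summable_pow_mul_geometric_of_norm_lt_one k hq
    refine (((h 0).add ((h 1).mul_left (2 * L))).add ((h 2).mul_left (L ^ 2))).congr fun n => ?_
    ring
  refine ⟨∑' n : ℕ, (1 + n * L) ^ 2 * q ^ n, fun n => ?_⟩
  calc (1 + n * L) ^ 2 = (1 + n * L) ^ 2 * q ^ n * (1 + ε) ^ n := by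
        rw [mul_assoc, ← mul_pow, inv_mul_cancel₀ (by linarith), one_pow, mul_one]
    _ ≤ _ := by
        gcongr
        exact hsum.le_tsum n fun m _ => mul_nonneg (sq_nonneg _) (pow_nonneg hq₀ m)

lemma le_csInf_mul {S : Set ℝ} (hS : S.Nonempty) {a F : ℝ} (hF : 0 ≤ F)
    (h : ∀ C ∈ S, a ≤ C * F) : a ≤ sInf S * F := by
  rcases hF.eq_or_lt with rfl | hF
  · obtain ⟨C, hC⟩ := hS
    simpa using h C hC
  · rw [← div_le_iff₀ hF]
    exact le_csInf hS fun C hC => (div_le_iff₀ hF).2 (h C hC)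

/-- The bounds `|g| ≤ 1`, `|g'| ≤ b`, `|g''| ≤ b²` on `S` are stable under products, with the
constants `b` adding up (Leibniz rule). -/
structure JetBoundedOn (S : Set ℝ) (b : ℝ) (g g' g'' : ℝ → ℝ) : Prop where
  hasDerivAt : ∀ t, HasDerivAt g (g' t) t
  hasDerivAt_deriv : ∀ t, HasDerivAt g' (g'' t) t
  abs_le_one : ∀ s ∈ S, |g s| ≤ 1
  abs_deriv_le : ∀ s ∈ S, |g' s| ≤ b
  abs_deriv2_le : ∀ s ∈ S, |g'' s| ≤ b ^ 2

namespace JetBoundedOn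

variable {S : Set ℝ}

lemma const_one : JetBoundedOn S 0 (fun _ => 1) (fun _ => 0) (fun _ => 0) where
  hasDerivAt t := hasDerivAt_const t 1
  hasDerivAt_deriv t := hasDerivAt_const t 0
  abs_le_one _ _ := by simp
  abs_deriv_le _ _ := by simp
  abs_deriv2_le _ _ := by simp

lemma mul {b₁ b₂ : ℝ} {f f' f'' g g' g'' : ℝ → ℝ} (hf : JetBoundedOn S b₁ f f' f'')
    (hg : JetBoundedOn S b₂ g g' g'') :
    JetBoundedOn S (b₁ + b₂) (fun t => f t * g t) (fun t => f' t * g t + f t * g' t)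
      (fun t => f'' t * g t + 2 * (f' t * g' t) + f t * g'' t) where
  hasDerivAt t := (hf.hasDerivAt t).mul (hg.hasDerivAt t)
  hasDerivAt_deriv t :=
    (((hf.hasDerivAt_deriv t).mul (hg.hasDerivAt t)).add
      ((hf.hasDerivAt t).mul (hg.hasDerivAt_deriv t))).congr_deriv (by ring)
  abs_le_one s hs := by
    rw [abs_mul]
    exact mul_le_one₀ (hf.abs_le_one s hs) (abs_nonneg _) (hg.abs_le_one s hs)
  abs_deriv_le s hs := by
    have hf₀ := hf.abs_le_one s hs
    have hf₁ := hf.abs_deriv_le s hs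
    have hg₀ := hg.abs_le_one s hs
    have hg₁ := hg.abs_deriv_le s hs
    calc |f' s * g s + f s * g' s| ≤ |f' s| * |g s| + |f s| * |g' s| := by
          rw [← abs_mul, ← abs_mul]
          exact abs_add_le _ _
      _ ≤ b₁ * 1 + 1 * b₂ := by
          gcongr
          · exact (abs_nonneg _).trans hf₁
      _ = b₁ + b₂ := by ring
  abs_deriv2_le s hs := by
    have hf₀ := hf.abs_le_one s hs
    have hf₁ := hf.abs_deriv_le s hs
    have hf₂ := hf.abs_deriv2_le s hs
    have hg₀ := hg.abs_le_one s hs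
    have hg₁ := hg.abs_deriv_le s hs
    have hg₂ := hg.abs_deriv2_le s hs
    have hb₁ : 0 ≤ b₁ := (abs_nonneg _).trans hf₁
    calc |f'' s * g s + 2 * (f' s * g' s) + f s * g'' s|
        ≤ |f'' s| * |g s| + 2 * (|f' s| * |g' s|) + |f s| * |g'' s| := by
          simp only [← abs_mul]
          refine (abs_add_le _ _).trans (add_le_add ((abs_add_le _ _).trans ?_) le_rfl)
          rw [abs_mul (2 : ℝ), abs_two]
      _ ≤ b₁ ^ 2 * 1 + 2 * (b₁ * b₂) + 1 * b₂ ^ 2 := by gcongr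
      _ = (b₁ + b₂) ^ 2 := by ring

lemma prod {ι : Type*} (u : Finset ι) {b : ι → ℝ} {f : ι → ℝ → ℝ}
    (hf : ∀ i ∈ u, ∃ f' f'', JetBoundedOn S (b i) (f i) f' f'') :
    ∃ F' F'', JetBoundedOn S (∑ i ∈ u, b i) (fun t => ∏ i ∈ u, f i t) F' F'' := by
  classical
  induction u using Finset.induction_on with
  | empty => exact ⟨_, _, by simpa using const_one⟩
  | insert a u ha ih =>
    obtain ⟨f', f'', hfa⟩ := hf a (Finset.mem_insert_self a u)
    obtain ⟨F', F'', hF⟩ := ih fun i hi => hf i (Finset.mem_insert_of_mem hi)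
    simp_rw [Finset.prod_insert ha, Finset.sum_insert ha]
    exact ⟨_, _, hfa.mul hF⟩

lemma pow {b : ℝ} {f f' f'' : ℝ → ℝ} (hf : JetBoundedOn S b f f' f'') (n : ℕ) :
    ∃ g' g'', JetBoundedOn S (n * b) (fun t => f t ^ n) g' g'' := by
  simpa using JetBoundedOn.prod (Finset.range n) (b := fun _ => b) (f := fun _ => f)
    fun _ _ => ⟨f', f'', hf⟩

lemma abs_le_one_add_sq {b : ℝ} {g g' g'' : ℝ → ℝ} (hg : JetBoundedOn S b g g' g'')
    (hb : 0 ≤ b) {s : ℝ} (hs : s ∈ S) :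
    |g s| ≤ (1 + b) ^ 2 ∧ |g' s| ≤ (1 + b) ^ 2 ∧ |g'' s| ≤ (1 + b) ^ 2 := by
  have h₀ := hg.abs_le_one s hs
  have h₁ := hg.abs_deriv_le s hs
  have h₂ := hg.abs_deriv2_le s hs
  refine ⟨?_, ?_, ?_⟩ <;> nlinarith

end JetBoundedOn

lemma jetBoundedOn_sum_mul_pow {ι : Type*} [Fintype ι] {S : Set ℝ} (a q c : ι → ℝ) {p : ℕ}
    (hp : 0 < p) (hc : ∀ i, |c i| ≤ 1) (hS : ∀ s ∈ S, ∑ i, |a i + s * q i| ≤ 1) :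
    JetBoundedOn S (p * ∑ i, |q i|) (fun t => ∑ i, c i * (a i + t * q i) ^ p)
      (fun t => ∑ i, c i * (p * (a i + t * q i) ^ (p - 1) * q i))
      (fun t => ∑ i, c i * (p * ((p - 1 : ℕ) * (a i + t * q i) ^ (p - 1 - 1) * q i) * q i)) := by
  have hA : ∀ s ∈ S, ∀ i, |a i + s * q i| ≤ 1 := fun s hs i =>
    (Finset.single_le_sum (fun j _ => abs_nonneg (a j + s * q j)) (Finset.mem_univ i)).trans
      (hS s hs)
  have hq : ∀ i, |q i| ≤ ∑ j, |q j| := fun i =>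
    Finset.single_le_sum (fun j _ => abs_nonneg (q j)) (Finset.mem_univ i)
  refine ⟨fun t => HasDerivAt.fun_sum fun i _ => ?_, fun t => HasDerivAt.fun_sum fun i _ => ?_,
    fun s hs => ?_, fun s hs => ?_, fun s hs => ?_⟩
  · exact (((((hasDerivAt_id t).mul_const (q i)).const_add (a i)).pow p).const_mul
      (c i)).congr_deriv (by simp)
  · exact ((((((((hasDerivAt_id t).mul_const (q i)).const_add (a i)).pow (p - 1)).const_mul
      (p : ℝ)).mul_const (q i))).const_mul (c i)).congr_deriv (by simp)
  · refine (Finset.abs_sum_le_sum_abs _ _).trans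
      ((Finset.sum_le_sum fun i _ => ?_).trans (hS s hs))
    rw [abs_mul, abs_pow]
    calc |c i| * |a i + s * q i| ^ p ≤ 1 * |a i + s * q i| := by
          gcongr
          · exact hc i
          · exact pow_le_of_le_one (abs_nonneg _) (hA s hs i) hp.ne'
      _ = |a i + s * q i| := one_mul _
  · refine (Finset.abs_sum_le_sum_abs _ _).trans ?_
    rw [Finset.mul_sum]
    refine Finset.sum_le_sum fun i _ => ?_
    simp only [abs_mul, abs_pow, Nat.abs_cast]
    calc |c i| * (p * |a i + s * q i| ^ (p - 1) * |q i|) ≤ 1 * (p * 1 * |q i|) := by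
          gcongr
          · exact hc i
          · exact pow_le_one₀ (abs_nonneg _) (hA s hs i)
      _ = p * |q i| := by ring
  · refine (Finset.abs_sum_le_sum_abs _ _).trans ?_
    rw [mul_pow, sq (∑ i, |q i|), Finset.sum_mul, Finset.mul_sum]
    refine Finset.sum_le_sum fun i _ => ?_
    simp only [abs_mul, abs_pow, Nat.abs_cast]
    have hp₁ : ((p - 1 : ℕ) : ℝ) ≤ p := by exact_mod_cast Nat.sub_le p 1
    calc |c i| * (p * ((p - 1 : ℕ) * |a i + s * q i| ^ (p - 1 - 1) * |q i|) * |q i|)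
        ≤ 1 * (p * (p * 1 * |q i|) * ∑ j, |q j|) := by
          gcongr
          · exact hc i
          · exact pow_le_one₀ (abs_nonneg _) (hA s hs i)
          · exact hq i
      _ = p ^ 2 * (|q i| * ∑ j, |q j|) := by ring

section

variable {κ : ℕ}

lemma l1norm_eq_sum_prod (R : Mat κ) : l1norm R = ∑ z : Fin κ × Fin κ, |R z.1 z.2| := by
  rw [Fintype.sum_prod_type]
  rfl

lemma l1norm_nonneg (R : Mat κ) : 0 ≤ l1norm R := by
  unfold l1norm
  positivity

lemma l1norm_add_le (A B : Mat κ) : l1norm (A + B) ≤ l1norm A + l1norm B := by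
  simp only [l1norm_eq_sum_prod, ← Finset.sum_add_distrib]
  exact Finset.sum_le_sum fun z _ => abs_add_le _ _

lemma l1norm_smul (c : ℝ) (A : Mat κ) : l1norm (c • A) = |c| * l1norm A := by
  simp [l1norm_eq_sum_prod, Finset.mul_sum, abs_mul]

lemma l1norm_single_one (k k' : Fin κ) : l1norm (Matrix.single k k' (1 : ℝ)) = 1 := by
  rw [l1norm_eq_sum_prod, Finset.sum_eq_single (k, k')]
  · simp
  · rintro ⟨i, j⟩ _ hij
    simp only [ne_eq, Prod.ext_iff, not_and, single_apply, abs_eq_zero, ite_eq_right_iff,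
      one_ne_zero, imp_false] at hij ⊢
    tauto
  · simp

lemma frobSq_nonneg (Q : Mat κ) : 0 ≤ frobSq Q := by
  unfold frobSq
  positivity

lemma sq_l1norm_le (Q : Mat κ) : l1norm Q ^ 2 ≤ κ ^ 2 * frobSq Q := by
  have h := sq_sum_le_card_mul_sum_sq (s := Finset.univ) (f := fun z : Fin κ × Fin κ => |Q z.1 z.2|)
  simpa [l1norm_eq_sum_prod, frobSq, Fintype.sum_prod_type, sq_abs, ← sq] using h

lemma convex_Rset : Convex ℝ (Rset κ) := by
  intro X hX Y hY a b ha hb hab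
  refine ⟨fun k k' => ?_, ?_⟩
  · obtain ⟨hX₀, hX₁⟩ := hX.1 k k'
    obtain ⟨hY₀, hY₁⟩ := hY.1 k k'
    simp only [Matrix.add_apply, Matrix.smul_apply, smul_eq_mul]
    constructor <;> nlinarith
  · calc l1norm (a • X + b • Y) ≤ a * l1norm X + b * l1norm Y := by
          simpa [l1norm_smul, abs_of_nonneg ha, abs_of_nonneg hb] using
            l1norm_add_le (a • X) (b • Y)
      _ ≤ 1 := by nlinarith [hX.2, hY.2]

lemma jetBoundedOn_quadForm_hadPow {S : Set ℝ} (x Q : Mat κ) {p : ℕ} (hp : 0 < p)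
    {w : Fin κ → ℝ} (hw : ∀ k, |w k| ≤ 1) (hS : ∀ s ∈ S, l1norm (x + s • Q) ≤ 1) :
    ∃ g' g'',
      JetBoundedOn S (p * l1norm Q) (fun t => quadForm (hadPow (x + t • Q) p) w) g' g'' := by
  have hquad : (fun t => quadForm (hadPow (x + t • Q) p) w) =
      fun t => ∑ z : Fin κ × Fin κ, w z.2 * w z.1 * (x z.1 z.2 + t * Q z.1 z.2) ^ p := by
    funext t
    rw [Fintype.sum_prod_type]
    refine Finset.sum_congr rfl fun k _ => Finset.sum_congr rfl fun k' _ => ?_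
    simp only [hadPow, Matrix.of_apply, Matrix.add_apply, Matrix.smul_apply, smul_eq_mul]
    ring
  rw [hquad, l1norm_eq_sum_prod]
  refine ⟨_, _, jetBoundedOn_sum_mul_pow _ _ _ hp (fun z => ?_) fun s hs => ?_⟩
  · rw [abs_mul]
    exact mul_le_one₀ (hw _) (abs_nonneg _) (hw _)
  · simpa [l1norm_eq_sum_prod] using hS s hs

lemma jetBoundedOn_xiTheta (θ : SpinParam κ) {S : Set ℝ} {x Q : Mat κ}
    (hS : ∀ s ∈ S, l1norm (x + s • Q) ≤ 1) :
    ∃ g' g'', JetBoundedOn S (θ.deg * l1norm Q) (fun t => xiTheta θ (x + t • Q)) g' g'' := by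
  have hdeg : (θ.deg : ℝ) * l1norm Q = ∑ j, θ.n j * (θ.p * l1norm Q) := by
    simp only [SpinParam.deg, Nat.cast_mul, Nat.cast_sum, Finset.mul_sum, Finset.sum_mul]
    exact Finset.sum_congr rfl fun j _ => by ring
  rw [hdeg]
  refine JetBoundedOn.prod Finset.univ fun j _ => ?_
  obtain ⟨g', g'', hg⟩ := jetBoundedOn_quadForm_hadPow x Q θ.p_pos (θ.w_bdd j) hS
  exact hg.pow (θ.n j)

lemma hessQuad_add_smul_eq {f : Mat κ → ℝ} {x Q : Mat κ} {U : Set ℝ} (hU : IsOpen U)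
    {g g' g'' : ℝ → ℝ} (hfg : EqOn (fun t => f (x + t • Q)) g U)
    (hg : ∀ t ∈ U, HasDerivAt g (g' t) t) (hg' : ∀ t ∈ U, HasDerivAt g' (g'' t) t) {s : ℝ}
    (hs : s ∈ U) : hessQuad f (x + s • Q) Q = g'' s := by
  have hshift := congrFun (iteratedDeriv_comp_const_add 2 (fun t => f (x + t • Q)) s) 0
  simp only [add_zero, add_smul, ← add_assoc] at hshift
  rw [hessQuad, hshift, hfg.iteratedDeriv_of_isOpen hU 2 hs, iteratedDeriv_succ, iteratedDeriv_one]
  have hderiv : deriv g =ᶠ[𝓝 s] g' :=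
    eventually_of_mem (hU.mem_nhds hs) fun t ht => (hg t ht).deriv
  rw [hderiv.deriv_eq]
  exact (hg' s hs).deriv

lemma isCBound_deg (θ : SpinParam κ) : IsCBound θ (θ.deg + (θ.deg * κ) ^ 2) := by
  intro R hR
  have hR' : ∀ Q : Mat κ, ∀ s ∈ ({0} : Set ℝ), l1norm (R + s • Q) ≤ 1 := by
    rintro Q s rfl
    simpa using hR
  refine ⟨fun k k' => ?_, fun Q => ?_⟩
  · obtain ⟨g', g'', hg⟩ := jetBoundedOn_xiTheta θ (hR' (Matrix.single k k' 1))
    have hgrad : gradXi θ R k k' = g' 0 := (hg.hasDerivAt 0).deriv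
    rw [hgrad]
    calc |g' 0| ≤ θ.deg * l1norm (Matrix.single k k' (1 : ℝ)) := hg.abs_deriv_le 0 rfl
      _ ≤ θ.deg + (θ.deg * κ) ^ 2 := by rw [l1norm_single_one]; nlinarith
  · obtain ⟨g', g'', hg⟩ := jetBoundedOn_xiTheta θ (hR' Q)
    have hhess : hessQuad (xiTheta θ) R Q = g'' 0 := by
      simpa using hessQuad_add_smul_eq isOpen_univ (x := R) (fun _ _ => rfl)
        (fun t _ => hg.hasDerivAt t) (fun t _ => hg.hasDerivAt_deriv t) (mem_univ 0)
    rw [hhess]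
    calc |g'' 0| ≤ (θ.deg * l1norm Q) ^ 2 := hg.abs_deriv2_le 0 rfl
      _ = θ.deg ^ 2 * l1norm Q ^ 2 := by ring
      _ ≤ θ.deg ^ 2 * (κ ^ 2 * frobSq Q) := by gcongr; exact sq_l1norm_le Q
      _ ≤ (θ.deg + (θ.deg * κ) ^ 2) * frobSq Q := by nlinarith [frobSq_nonneg Q]

lemma abs_hessQuad_xiTheta_le (θ : SpinParam κ) {R : Mat κ} (hR : l1norm R ≤ 1) (Q : Mat κ) :
    |hessQuad (xiTheta θ) R Q| ≤ Ctheta θ * frobSq Q :=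
  le_csInf_mul ⟨_, isCBound_deg θ⟩ (frobSq_nonneg Q) fun _ hC => (hC R hR).2 Q

lemma neg_tsum_mul_Ctheta_le {ι : Type*} (θ : ι → SpinParam κ) (b : ι → ℝ)
    (hb : Summable fun i => b i ^ 2 * Ctheta (θ i)) {R Q : Mat κ} (hR : l1norm R ≤ 1) {H : ℝ}
    (hH : HasSum (fun i => b i ^ 2 * hessQuad (xiTheta (θ i)) R Q) H) :
    -((∑' i, b i ^ 2 * Ctheta (θ i)) * frobSq Q) ≤ H := by
  refine hasSum_le (fun i => ?_) (hb.hasSum.mul_right (frobSq Q)).neg hH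
  have := abs_hessQuad_xiTheta_le (θ i) hR Q
  nlinarith [neg_abs_le (hessQuad (xiTheta (θ i)) R Q), sq_nonneg (b i)]

lemma hasDerivAt₂_tsum_xiTheta_segment {ι : Type*} (θ : ι → SpinParam κ) (a : ι → ℝ) {ε : ℝ}
    (hε : 0 < ε) (ha : Summable fun i => a i ^ 2 * (1 + ε) ^ (θ i).deg) {x Q : Mat κ}
    (hline : ∀ s ∈ Icc (0 : ℝ) 1, l1norm (x + s • Q) ≤ 1) :
    ContinuousOn (fun s : ℝ => ∑' i, a i ^ 2 * xiTheta (θ i) (x + s • Q)) (Icc (0 : ℝ) 1) ∧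
    ∃ G' G'' : ℝ → ℝ, ∀ s ∈ Ioo (0 : ℝ) 1,
      HasDerivAt (fun s : ℝ => ∑' i, a i ^ 2 * xiTheta (θ i) (x + s • Q)) (G' s) s ∧
      HasDerivAt G' (G'' s) s ∧
      HasSum (fun i => a i ^ 2 * hessQuad (xiTheta (θ i)) (x + s • Q) Q) (G'' s) := by
  obtain ⟨K, hK⟩ := exists_one_add_mul_sq_le hε (l1norm Q)
  choose g' g'' hg using fun i => jetBoundedOn_xiTheta (θ i) hline
  set u := fun i => K * (a i ^ 2 * (1 + ε) ^ (θ i).deg)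
  have hu : Summable u := ha.mul_left K
  have hbound : ∀ i, ∀ y : ℝ, |y| ≤ (1 + (θ i).deg * l1norm Q) ^ 2 → ‖a i ^ 2 * y‖ ≤ u i := by
    intro i y hy
    calc ‖a i ^ 2 * y‖ = a i ^ 2 * |y| := by rw [Real.norm_eq_abs, abs_mul, abs_sq]
      _ ≤ a i ^ 2 * (K * (1 + ε) ^ (θ i).deg) := by gcongr; exact hy.trans (hK _)
      _ = u i := by ring
  have hjet i {s} (hs : s ∈ Icc (0 : ℝ) 1) :=
    (hg i).abs_le_one_add_sq (mul_nonneg (Nat.cast_nonneg _) (l1norm_nonneg Q)) hs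
  have hIoo : ∀ {s}, s ∈ Ioo (0 : ℝ) 1 → s ∈ Icc (0 : ℝ) 1 := fun hs => Ioo_subset_Icc_self hs
  have hhalf : (1 / 2 : ℝ) ∈ Ioo 0 1 := by norm_num
  refine ⟨continuousOn_tsum (fun i => ?_) hu fun i s hs => hbound i _ (hjet i hs).1,
    fun s => ∑' i, a i ^ 2 * g' i s, fun s => ∑' i, a i ^ 2 * g'' i s, fun s hs => ⟨?_, ?_, ?_⟩⟩
  · exact (continuous_const.mul (continuous_iff_continuousAt.2 fun t =>
      ((hg i).hasDerivAt t).continuousAt)).continuousOn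
  · exact hasDerivAt_tsum_of_isPreconnected hu isOpen_Ioo isPreconnected_Ioo
      (fun i t _ => ((hg i).hasDerivAt t).const_mul _)
      (fun i t ht => hbound i _ (hjet i (hIoo ht)).2.1) hhalf
      (.of_norm_bounded hu fun i => hbound i _ (hjet i (hIoo hhalf)).1) hs
  · exact hasDerivAt_tsum_of_isPreconnected hu isOpen_Ioo isPreconnected_Ioo
      (fun i t _ => ((hg i).hasDerivAt_deriv t).const_mul _)
      (fun i t ht => hbound i _ (hjet i (hIoo ht)).2.2) hhalf
      (.of_norm_bounded hu fun i => hbound i _ (hjet i (hIoo hhalf)).2.1) hs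
  · have hhess i : hessQuad (xiTheta (θ i)) (x + s • Q) Q = g'' i s :=
      hessQuad_add_smul_eq isOpen_univ (fun _ _ => rfl) (fun t _ => (hg i).hasDerivAt t)
        (fun t _ => (hg i).hasDerivAt_deriv t) (mem_univ s)
    simp only [hhess]
    exact (Summable.of_norm_bounded hu fun i => hbound i _ (hjet i (hIoo hs)).2.2).hasSum

end

theorem stmt12_general (κ : ℕ) (ξ : Mat κ → ℝ)
    (T : Set (SpinParam κ)) (α : SpinParam κ → ℝ)
    (hrep : ∀ R : Mat κ, l1norm R ≤ 1 → ξ R = ∑' θ : T, α θ.1 ^ 2 * xiTheta θ.1 R)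
    (hαsum : ∃ ε₀ : ℝ, 0 < ε₀ ∧ Summable fun θ : T => α θ.1 ^ 2 * (1 + ε₀) ^ θ.1.deg)
    (c : ℝ)
    (hstrong : ∀ R ∈ Rset κ, ∀ Q : Mat κ, c * frobSq Q ≤ hessQuad ξ R Q)
    (β : SpinParamQ κ → ℝ)
    (hβsum : ∃ ε₁ : ℝ, 0 < ε₁ ∧
      Summable fun θ : SpinParamQ κ => β θ ^ 2 * (1 + ε₁) ^ θ.1.deg)
    (hβC : Summable fun θ : SpinParamQ κ => β θ ^ 2 * Ctheta θ.1)
    (hβCc : ∑' θ : SpinParamQ κ, β θ ^ 2 * Ctheta θ.1 < c) :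
    ConvexOn ℝ (Rset κ)
      (fun R => ξ R + ∑' θ : SpinParamQ κ, β θ ^ 2 * xiTheta θ.1 R) := by
  obtain ⟨ε₀, hε₀, hα⟩ := hαsum
  obtain ⟨ε₁, hε₁, hβ⟩ := hβsum
  refine convexOn_of_convexOn_segment convex_Rset fun X hX Y hY => ?_
  set Q := X - Y
  have hline : ∀ s ∈ Icc (0 : ℝ) 1, Y + s • Q ∈ Rset κ := fun s hs =>
    convex_Rset.add_smul_sub_mem hY hX hs
  have hline₁ : ∀ s ∈ Icc (0 : ℝ) 1, l1norm (Y + s • Q) ≤ 1 := fun s hs => (hline s hs).2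
  obtain ⟨hΦc, Φ', Φ'', hΦ⟩ :=
    hasDerivAt₂_tsum_xiTheta_segment (fun θ : T => θ.1) (fun θ => α θ.1) hε₀ hα hline₁
  obtain ⟨hΨc, Ψ', Ψ'', hΨ⟩ := hasDerivAt₂_tsum_xiTheta_segment Subtype.val β hε₁ hβ hline₁
  have hξ : EqOn (fun s : ℝ => ξ (Y + s • Q))
      (fun s => ∑' θ : T, α θ.1 ^ 2 * xiTheta θ.1 (Y + s • Q)) (Icc (0 : ℝ) 1) :=
    fun s hs => hrep _ (hline₁ s hs)
  refine (convexOn_of_hasDerivWithinAt2_nonneg (f' := fun s => Φ' s + Ψ' s)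
    (f'' := fun s => Φ'' s + Ψ'' s) (convex_Icc (0 : ℝ) 1) (hΦc.add hΨc) ?_ ?_ ?_).congr
    fun s hs => congrArg (· + _) (hξ hs).symm <;> simp only [interior_Icc]
  · exact fun s hs => ((hΦ s hs).1.add (hΨ s hs).1).hasDerivWithinAt
  · exact fun s hs => ((hΦ s hs).2.1.add (hΨ s hs).2.1).hasDerivWithinAt
  intro s hs
  have hΦ'' : c * frobSq Q ≤ Φ'' s := by
    rw [← hessQuad_add_smul_eq isOpen_Ioo (hξ.mono Ioo_subset_Icc_self) (fun t ht => (hΦ t ht).1)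
      (fun t ht => (hΦ t ht).2.1) hs]
    exact hstrong _ (hline s (Ioo_subset_Icc_self hs)) Q
  have hΨ'' := neg_tsum_mul_Ctheta_le Subtype.val β hβC (hline₁ s (Ioo_subset_Icc_self hs))
    (hΨ s hs).2.2
  nlinarith [mul_le_mul_of_nonneg_right hβCc.le (frobSq_nonneg Q)]

/-- if `ξ = Σ_{θ∈Θ₀} α_θ² ξ_θ` (Θ₀ countable, with exponential decay of
the coefficients), `c := inf_{R∈R_κ} λ_min(∇²ξ(R)) > 0`, and
`β` has exponentially decaying coefficients with `Σ_{θ∈Θ_Q} β_θ² C_θ < c`, then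
`ξ_β = ξ + Σ_{θ∈Θ_Q} β_θ² ξ_θ` is convex on `R_κ`. -/
theorem stmt12 (κ : ℕ) (hκ : 2 ≤ κ) (ξ : Mat κ → ℝ)
    (T : Set (SpinParam κ)) (hT : T.Countable) (α : SpinParam κ → ℝ)
    (hrep : ∀ R : Mat κ, l1norm R ≤ 1 → ξ R = ∑' θ : T, α θ.1 ^ 2 * xiTheta θ.1 R)
    (hαsum : ∃ ε₀ : ℝ, 0 < ε₀ ∧ Summable fun θ : T => α θ.1 ^ 2 * (1 + ε₀) ^ θ.1.deg)
    (c : ℝ) (hc : 0 < c)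
    (hstrong : ∀ R ∈ Rset κ, ∀ Q : Mat κ, c * frobSq Q ≤ hessQuad ξ R Q)
    (β : SpinParamQ κ → ℝ)
    (hβsum : ∃ ε₁ : ℝ, 0 < ε₁ ∧
      Summable fun θ : SpinParamQ κ => β θ ^ 2 * (1 + ε₁) ^ θ.1.deg)
    (hβC : Summable fun θ : SpinParamQ κ => β θ ^ 2 * Ctheta θ.1)
    (hβCc : ∑' θ : SpinParamQ κ, β θ ^ 2 * Ctheta θ.1 < c) :
    ConvexOn ℝ (Rset κ)
      (fun R => ξ R + ∑' θ : SpinParamQ κ, β θ ^ 2 * xiTheta θ.1 R) :=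
  stmt12_general κ ξ T α hrep hαsum c hstrong β hβsum hβC hβCc
end

section
/- Let (Ω, F, P) be a probability space and X : Ω → ℝ^{κ×κ} an integrable random matrix. Assume: (i) for every permutation ω of {1,…,κ}, the random matrix ω•X has the same law as X; and (ii) X is measurable with respect to the σ-algebra generated by tr(X). Then almost surely X_{k₁,k₁} = X_{k₂,k₂} for all k₁, k₂ ∈ {1,…,κ}, and X_{k₁,k₁'} = X_{k₂,k₂'} for all k₁ ≠ k₁' and k₂ ≠ k₂'. (This is the mechanism behind the fact that a synchronized overlap array with permutation-symmetric law takes values in the symmetric set Γ*.) -/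
/-!
Relabelling rows and columns by a permutation `σ` preserves the trace `T`, so the invariance of
the law of `X` gives `(X_{σk,σk'}, T) ~ (X_{k,k'}, T)`. Since `X_{k,k'} = g(T)` for a measurable
`g`, the event `X_{σk,σk'} ≠ g(T)` has the probability of `X_{k,k'} ≠ g(T)`, namely zero; hence
`X_{σk,σk'} = X_{k,k'}` almost surely. Permutations act transitively on diagonal positions and on
off-diagonal positions.
-/

open MeasureTheory

theorem Equiv.Perm.exists_apply_eq_and_apply_eq {α : Type*} {a a' b b' : α} (ha : a ≠ a')
    (hb : b ≠ b') : ∃ σ : Perm α, σ a = b ∧ σ a' = b' := by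
  have pair_injective {x x' : α} (hx : x ≠ x') :
      Function.Injective fun i : Bool => cond i x' x := by
    rintro (_ | _) (_ | _) h <;> simp_all [eq_comm]
  obtain ⟨σ, hσ⟩ := Perm.exists_extending_pair _ _ (pair_injective ha) (pair_injective hb)
  exact ⟨σ, hσ false, hσ true⟩

theorem ae_eq_of_map_prod_eq_of_measurable_comap {Ω β γ : Type*}
    [MeasurableSpace Ω] [MeasurableSpace β] [StandardBorelSpace β] [Nonempty β]
    [mγ : MeasurableSpace γ] {μ : Measure Ω} {Y Y' : Ω → β} {T : Ω → γ}
    (hY : Measurable Y) (hT : Measurable T) (hY' : Measurable[MeasurableSpace.comap T mγ] Y')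
    (hlaw : μ.map (fun a => (Y a, T a)) = μ.map (fun a => (Y' a, T a))) : Y =ᵐ[μ] Y' := by
  obtain ⟨g, hg, rfl⟩ := hY'.exists_eq_measurable_comp
  have hD : MeasurableSet {p : β × γ | p.1 ≠ g p.2} :=
    (measurableSet_eq_fun measurable_fst (hg.comp measurable_snd)).compl
  have hnull : μ.map (fun a => ((g ∘ T) a, T a)) {p | p.1 ≠ g p.2} = 0 := by
    rw [Measure.map_apply ((hg.comp hT).prodMk hT) hD]
    simp
  rw [← hlaw, Measure.map_apply (hY.prodMk hT) hD] at hnull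
  exact ae_iff.2 hnull

theorem ae_entry_perm_eq_entry {ι Ω : Type*} [Fintype ι] [MeasurableSpace Ω] {P : Measure Ω}
    {X : Ω → Matrix ι ι ℝ} (hXmeas : ∀ k k', Measurable fun a => X a k k')
    (hlaw : ∀ ω : Equiv.Perm ι,
      Measure.map (fun a => fun k k' : ι => X a (ω⁻¹ k) (ω⁻¹ k')) P
        = Measure.map (fun a => fun k k' : ι => X a k k') P)
    (hsync : ∀ k k',
      Measurable[MeasurableSpace.comap (fun a => ∑ i, X a i i) inferInstance]
        fun a => X a k k')
    (σ : Equiv.Perm ι) (k k' : ι) : ∀ᵐ a ∂P, X a (σ k) (σ k') = X a k k' := by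
  have hX : Measurable fun a => fun k k' : ι => X a k k' :=
    measurable_pi_lambda _ fun k => measurable_pi_lambda _ fun k' => hXmeas k k'
  have hσX : Measurable fun a => fun k k' : ι => X a (σ⁻¹ k) (σ⁻¹ k') :=
    measurable_pi_lambda _ fun k => measurable_pi_lambda _ fun k' => hXmeas _ _
  set Φ : (ι → ι → ℝ) → ℝ × ℝ := fun M => (M (σ k) (σ k'), ∑ i, M i i)
  have hΦ : Measurable Φ := by fun_prop
  refine ae_eq_of_map_prod_eq_of_measurable_comap (hXmeas _ _)
    (Finset.measurable_sum Finset.univ fun i _ => hXmeas i i) (hsync k k') ?_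
  have hΦσX : Φ ∘ (fun a k k' => X a (σ⁻¹ k) (σ⁻¹ k')) = fun a => (X a k k', ∑ i, X a i i) := by
    funext a
    simp only [Φ, Function.comp_apply, Equiv.Perm.inv_def, Equiv.symm_apply_apply,
      Equiv.sum_comp σ.symm fun i => X a i i]
  have hlawΦ := congrArg (Measure.map Φ) (hlaw σ)
  rwa [Measure.map_map hΦ hσX, Measure.map_map hΦ hX, hΦσX, eq_comm] at hlawΦ

theorem stmt17_general (κ : ℕ) (Ω : Type*) [MeasurableSpace Ω]
    (P : Measure Ω) (X : Ω → Mat κ)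
    (hXmeas : ∀ k k', Measurable fun a => X a k k')
    (hlaw : ∀ ω : Equiv.Perm (Fin κ),
      Measure.map (fun a => fun k k' : Fin κ => X a (ω⁻¹ k) (ω⁻¹ k')) P
        = Measure.map (fun a => fun k k' : Fin κ => X a k k') P)
    (hsync : ∀ k k',
      Measurable[MeasurableSpace.comap (fun a => ∑ i, X a i i) inferInstance]
        fun a => X a k k') :
    ∀ᵐ a ∂P,
      (∀ k₁ k₂, X a k₁ k₁ = X a k₂ k₂) ∧
      ∀ k₁ k₁' k₂ k₂', k₁ ≠ k₁' → k₂ ≠ k₂' → X a k₁ k₁' = X a k₂ k₂' := by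
  have hentry := ae_entry_perm_eq_entry hXmeas hlaw hsync
  have hdiag : ∀ᵐ a ∂P, ∀ k₁ k₂, X a k₁ k₁ = X a k₂ k₂ := by
    simp only [ae_all_iff]
    intro k₁ k₂
    simpa only [Equiv.swap_apply_left] using hentry (Equiv.swap k₂ k₁) k₂ k₂
  have hoff : ∀ᵐ a ∂P, ∀ k₁ k₁' k₂ k₂', k₁ ≠ k₁' → k₂ ≠ k₂' → X a k₁ k₁' = X a k₂ k₂' := by
    simp only [ae_all_iff, Filter.eventually_imp_distrib_left]
    intro k₁ k₁' k₂ k₂' h₁ h₂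
    obtain ⟨σ, rfl, rfl⟩ := Equiv.Perm.exists_apply_eq_and_apply_eq h₂ h₁
    exact hentry σ k₂ k₂'
  exact hdiag.and hoff

/-- if an integrable random matrix `X` has a permutation-invariant law
(`ω•X ~ X` for all permutations `ω`, where `(ω•R)_{k,k'} = R_{ω⁻¹(k),ω⁻¹(k')}`) and is
measurable with respect to the σ-algebra generated by `tr(X)`, then almost surely the
diagonal entries of `X` all coincide and the off-diagonal entries all coincide. -/
theorem stmt17 (κ : ℕ) (hκ : 2 ≤ κ) (Ω : Type*) [MeasurableSpace Ω]
    (P : Measure Ω) [IsProbabilityMeasure P]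
    (X : Ω → Mat κ)
    (hXmeas : ∀ k k', Measurable fun a => X a k k')
    (hXint : ∀ k k', Integrable (fun a => X a k k') P)
    (hlaw : ∀ ω : Equiv.Perm (Fin κ),
      Measure.map (fun a => fun k k' : Fin κ => X a (ω⁻¹ k) (ω⁻¹ k')) P
        = Measure.map (fun a => fun k k' : Fin κ => X a k k') P)
    (hsync : ∀ k k',
      Measurable[MeasurableSpace.comap (fun a => ∑ i, X a i i) inferInstance]
        fun a => X a k k') :
    ∀ᵐ a ∂P,
      (∀ k₁ k₂, X a k₁ k₁ = X a k₂ k₂) ∧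
      ∀ k₁ k₁' k₂ k₂', k₁ ≠ k₁' → k₂ ≠ k₂' → X a k₁ k₁' = X a k₂ k₂' :=
  stmt17_general κ Ω P X hXmeas hlaw hsync
end
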